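/- arXiv:2604.07975 — 5 statements merged into one kernel-verified Lean document; each statement's English description precedes it below -/
import Mathlib

section
/- Let α, β > 0 and let L be the real 4×4 matrix L = [[0,0,1,0],[0,0,0,1],[2α,0,0,2],[0,2β,−2,0]] (the linearization of the planar electromagnetic toy model at the origin). Then L, viewed as a complex matrix, is diagonalizable and all of its complex eigenvalues are purely imaginary if and only if √α + √β < √2. -/
open Matrix

/-- The linearization of the planar electromagnetic toy model at the origin. -/
noncomputable def toyL (α β : ℝ) : Matrix (Fin 4) (Fin 4) ℝ :=
  !![0, 0, 1, 0;
     0, 0, 0, 1;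
     2*α, 0, 0, 2;
     0, 2*β, -2, 0]

/-- `toyL` viewed as a complex matrix. -/
noncomputable def toyLC (α β : ℝ) : Matrix (Fin 4) (Fin 4) ℂ :=
  (toyL α β).map (algebraMap ℝ ℂ)

/-- A square complex matrix is diagonalizable if it is conjugate to a diagonal matrix. -/
def IsDiagonalizableC {N : ℕ} (A : Matrix (Fin N) (Fin N) ℂ) : Prop :=
  ∃ P : Matrix (Fin N) (Fin N) ℂ, IsUnit P ∧ (P⁻¹ * A * P).IsDiag

/-!
The characteristic polynomial of `L` is `μ⁴ + 2(2 - α - β) μ² + 4αβ`, a quadratic in `ν = μ²`.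
All eigenvalues are purely imaginary iff both roots are of the form `ν = -t²` with `t` real, i.e.
`t₁² + t₂² = 2(2 - α - β)` and `t₁² t₂² = 4αβ`; by AM-GM this gives `2√(αβ) ≤ 2 - α - β`, which
is `(√α + √β)² ≤ 2`. In the equality case `ν = -t₁²` is a double root, and diagonalizability would
force `L² = -t₁² • 1`, which fails because `(L²)₀₃ = 2`. Under the strict inequality the
eigenvalues `±i t₁, ±i t₂` are distinct, so `L` is diagonalizable.
-/

theorem isDiagonalizableC_of_injective_of_mem_spectrum {N : ℕ} {A : Matrix (Fin N) (Fin N) ℂ}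
    (d : Fin N → ℂ) (hd : Function.Injective d) (hspec : ∀ j, d j ∈ spectrum ℂ A) :
    IsDiagonalizableC A := by
  have hev (j : Fin N) : Module.End.HasEigenvalue (toLin' A) (d j) :=
    .of_mem_spectrum (by rw [spectrum_toLin']; exact hspec j)
  choose v hv using fun j => (hev j).exists_hasEigenvector
  set P : Matrix (Fin N) (Fin N) ℂ := Matrix.of fun i j => v j i
  have hP : IsUnit P :=
    linearIndependent_cols_iff_isUnit.1 (Module.End.eigenvectors_linearIndependent' _ d hd v hv)
  have hAP : A * P = P * diagonal d := by
    ext i j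
    rw [mul_diagonal]
    simpa [P, Matrix.mul_apply, mulVec, dotProduct, mul_comm] using
      congrFun (hv j).apply_eq_smul i
  refine ⟨P, hP, ?_⟩
  rw [Matrix.mul_assoc, hAP, ← Matrix.mul_assoc,
    nonsing_inv_mul _ ((isUnit_iff_isUnit_det P).1 hP), Matrix.one_mul]
  exact isDiag_diagonal d

theorem IsDiagonalizableC.mul_self_eq_smul_one {N : ℕ} {A : Matrix (Fin N) (Fin N) ℂ}
    (hA : IsDiagonalizableC A) {c : ℂ} (hc : ∀ μ ∈ spectrum ℂ A, μ ^ 2 = c) :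
    A * A = c • 1 := by
  obtain ⟨P, hP, hD⟩ := hA
  have hPP : P * P⁻¹ = 1 := mul_nonsing_inv P ((isUnit_iff_isUnit_det P).1 hP)
  have hspec : spectrum ℂ (P⁻¹ * A * P) = spectrum ℂ A := by
    simpa using spectrum.units_conjugate' (R := ℂ) (a := A) (u := hP.unit)
  have hA : A = P * (P⁻¹ * A * P) * P⁻¹ := by
    simp only [← Matrix.mul_assoc, hPP, Matrix.one_mul]
    rw [Matrix.mul_assoc, hPP, Matrix.mul_one]
  generalize P⁻¹ * A * P = D at hD hspec hA
  have hDD : D * D = c • 1 := by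
    rw [← hD.diagonal_diag, diagonal_mul_diagonal, smul_one_eq_diagonal]
    congr 1
    funext i
    refine (sq _).symm.trans (hc _ ?_)
    rw [← hspec, ← hD.diagonal_diag, spectrum_diagonal]
    exact ⟨i, by simp⟩
  have hPP' : P⁻¹ * P = 1 := nonsing_inv_mul P ((isUnit_iff_isUnit_det P).1 hP)
  rw [hA]
  simp only [Matrix.mul_assoc]
  rw [← Matrix.mul_assoc P⁻¹, hPP', Matrix.one_mul, ← Matrix.mul_assoc D, hDD, Matrix.smul_mul,
    Matrix.one_mul, Matrix.mul_smul, hPP]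

theorem Complex.re_eq_zero_iff_exists_sq_eq_neg_sq (μ : ℂ) :
    μ.re = 0 ↔ ∃ t : ℝ, μ ^ 2 = -(t : ℂ) ^ 2 := by
  constructor
  · intro h
    refine ⟨μ.im, ?_⟩
    apply Complex.ext <;> simp [sq, h]
  · rintro ⟨t, ht⟩
    have : (μ - t * Complex.I) * (μ + t * Complex.I) = 0 := by
      linear_combination ht - (t : ℂ) ^ 2 * Complex.I_sq
    rcases mul_eq_zero.1 this with h | h
    · simp [sub_eq_zero.1 h]
    · simp [eq_neg_of_add_eq_zero_left h]

theorem Complex.exists_add_eq_and_mul_eq (b d : ℂ) : ∃ ν₁ ν₂ : ℂ, ν₁ + ν₂ = b ∧ ν₁ * ν₂ = d := by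
  obtain ⟨z, hz⟩ := IsAlgClosed.exists_eq_mul_self (b ^ 2 - 4 * d)
  exact ⟨(b + z) / 2, (b - z) / 2, by ring, by linear_combination hz / 4⟩

theorem Real.sqrt_add_sqrt_lt_sqrt_two_iff {a b : ℝ} (ha : 0 ≤ a) (hb : 0 ≤ b) :
    √a + √b < √2 ↔ 2 * √(a * b) < 2 - a - b := by
  rw [Real.lt_sqrt (by positivity), add_sq, Real.sq_sqrt ha, Real.sq_sqrt hb, Real.sqrt_mul ha]
  constructor <;> intro h <;> linarith

theorem exists_sq_add_sq_of_two_mul_sqrt_lt {p q : ℝ} (hq : 0 < q) (h : 2 * √q < p) :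
    ∃ w₁ w₂ : ℝ, 0 < w₁ ∧ 0 < w₂ ∧ w₁ ≠ w₂ ∧ w₁ ^ 2 + w₂ ^ 2 = 2 * p ∧ w₁ ^ 2 * w₂ ^ 2 = 4 * q := by
  have hsq : (2 * √q) ^ 2 = 4 * q := by rw [mul_pow, Real.sq_sqrt hq.le]; norm_num
  have hdisc : 0 < p ^ 2 - 4 * q := by nlinarith [Real.sqrt_pos.2 hq]
  set s := √(p ^ 2 - 4 * q)
  have hs : s ^ 2 = p ^ 2 - 4 * q := Real.sq_sqrt hdisc.le
  have hs_pos : 0 < s := Real.sqrt_pos.2 hdisc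
  have hp : 0 < p := by linarith [Real.sqrt_pos.2 hq]
  have hsp : s < p := lt_of_pow_lt_pow_left₀ 2 hp.le (by rw [hs]; linarith)
  refine ⟨√(p - s), √(p + s), Real.sqrt_pos.2 (by linarith), Real.sqrt_pos.2 (by linarith),
    fun heq => ?_, ?_, ?_⟩
  · have := Real.sqrt_inj (by linarith) (by linarith) |>.1 heq
    linarith
  · rw [Real.sq_sqrt (by linarith), Real.sq_sqrt (by linarith)]; ring
  · rw [Real.sq_sqrt (by linarith), Real.sq_sqrt (by linarith)]; linear_combination -hs

theorem two_mul_sqrt_lt_of_sq_add_sq {p q t₁ t₂ : ℝ} (hsum : t₁ ^ 2 + t₂ ^ 2 = 2 * p)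
    (hprod : t₁ ^ 2 * t₂ ^ 2 = 4 * q) (hne : t₁ ^ 2 ≠ t₂ ^ 2) : 2 * √q < p := by
  have hd : 0 < (t₁ ^ 2 - t₂ ^ 2) ^ 2 := by have := sub_ne_zero.2 hne; positivity
  have hp : 0 < p := by nlinarith [sq_nonneg t₁, sq_nonneg t₂]
  rw [← lt_div_iff₀' two_pos, Real.sqrt_lt' (by positivity)]
  nlinarith

noncomputable def toyChar (α β : ℝ) (μ : ℂ) : ℂ := μ ^ 4 + 2 * (2 - α - β) * μ ^ 2 + 4 * (α * β)

theorem mem_spectrum_toyLC_iff {α β : ℝ} {μ : ℂ} :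
    μ ∈ spectrum ℂ (toyLC α β) ↔ toyChar α β μ = 0 := by
  have h : algebraMap ℂ _ μ - toyLC α β
      = !![μ, 0, -1, 0; 0, μ, 0, -1; -(2 * α), 0, μ, -2; 0, -(2 * β), 2, μ] := by
    ext i j
    fin_cases i <;> fin_cases j <;> simp [toyLC, toyL, algebraMap_eq_diagonal]
  have hdet : (algebraMap ℂ _ μ - toyLC α β).det = toyChar α β μ := by
    rw [h, det_succ_row_zero]
    simp [Fin.sum_univ_succ, det_fin_three, Fin.succAbove, toyChar]
    ring
  rw [spectrum.mem_iff, isUnit_iff_isUnit_det, isUnit_iff_ne_zero, not_not, hdet]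

theorem toyChar_eq_mul {α β w₁ w₂ : ℝ} (hsum : w₁ ^ 2 + w₂ ^ 2 = 2 * (2 - α - β))
    (hprod : w₁ ^ 2 * w₂ ^ 2 = 4 * (α * β)) (μ : ℂ) :
    toyChar α β μ = (μ ^ 2 + (w₁ : ℂ) ^ 2) * (μ ^ 2 + (w₂ : ℂ) ^ 2) := by
  have hsum' : (w₁ : ℂ) ^ 2 + (w₂ : ℂ) ^ 2 = 2 * (2 - α - β) := by exact_mod_cast hsum
  have hprod' : (w₁ : ℂ) ^ 2 * (w₂ : ℂ) ^ 2 = 4 * (α * β) := by exact_mod_cast hprod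
  unfold toyChar
  linear_combination (-μ ^ 2) * hsum' - hprod'

theorem toyLC_mul_self_apply_zero_three (α β : ℝ) : (toyLC α β * toyLC α β) 0 3 = 2 := by
  simp [toyLC, toyL, Matrix.mul_apply, Fin.sum_univ_four]

theorem exists_sq_add_sq_of_forall_re_eq_zero {α β : ℝ}
    (him : ∀ μ ∈ spectrum ℂ (toyLC α β), μ.re = 0) :
    ∃ t₁ t₂ : ℝ, t₁ ^ 2 + t₂ ^ 2 = 2 * (2 - α - β) ∧ t₁ ^ 2 * t₂ ^ 2 = 4 * (α * β) := by
  have hroot (ν : ℂ) (hν : ν ^ 2 + 2 * (2 - α - β) * ν + 4 * (α * β) = 0) :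
      ∃ t : ℝ, ν = -(t : ℂ) ^ 2 := by
    obtain ⟨μ, hμ⟩ := IsAlgClosed.exists_eq_mul_self ν
    have hμspec : μ ∈ spectrum ℂ (toyLC α β) := by
      rw [mem_spectrum_toyLC_iff, toyChar]
      linear_combination hν - (μ ^ 2 + ν + 2 * (2 - α - β)) * hμ
    obtain ⟨t, ht⟩ := (Complex.re_eq_zero_iff_exists_sq_eq_neg_sq μ).1 (him μ hμspec)
    exact ⟨t, by rw [hμ, ← sq, ht]⟩
  obtain ⟨ν₁, ν₂, hsum, hprod⟩ :=
    Complex.exists_add_eq_and_mul_eq (-(2 * (2 - α - β))) (4 * (α * β))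
  obtain ⟨t₁, rfl⟩ := hroot ν₁ (by linear_combination ν₁ * hsum - hprod)
  obtain ⟨t₂, rfl⟩ := hroot ν₂ (by linear_combination ν₂ * hsum - hprod)
  refine ⟨t₁, t₂, ?_, ?_⟩
  · exact_mod_cast (by linear_combination -hsum : (t₁ : ℂ) ^ 2 + t₂ ^ 2 = 2 * (2 - α - β))
  · exact_mod_cast (by linear_combination hprod : (t₁ : ℂ) ^ 2 * t₂ ^ 2 = 4 * (α * β))

theorem two_mul_sqrt_lt_of_isDiagonalizableC_toyLC {α β : ℝ}
    (hdiag : IsDiagonalizableC (toyLC α β)) (him : ∀ μ ∈ spectrum ℂ (toyLC α β), μ.re = 0) :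
    2 * √(α * β) < 2 - α - β := by
  obtain ⟨t₁, t₂, hsum, hprod⟩ := exists_sq_add_sq_of_forall_re_eq_zero him
  refine two_mul_sqrt_lt_of_sq_add_sq hsum hprod fun heq => ?_
  have hsq : ∀ μ ∈ spectrum ℂ (toyLC α β), μ ^ 2 = -(t₁ : ℂ) ^ 2 := by
    intro μ hμ
    have heq' : (t₂ : ℂ) ^ 2 = (t₁ : ℂ) ^ 2 := by exact_mod_cast heq.symm
    rw [mem_spectrum_toyLC_iff, toyChar_eq_mul hsum hprod, heq', ← sq] at hμ
    exact eq_neg_of_add_eq_zero_left (pow_eq_zero_iff two_ne_zero |>.1 hμ)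
  simpa [toyLC_mul_self_apply_zero_three] using
    congr_fun₂ (hdiag.mul_self_eq_smul_one hsq) 0 3

theorem isDiagonalizableC_toyLC_of_two_mul_sqrt_lt {α β : ℝ} (hα : 0 < α) (hβ : 0 < β)
    (h : 2 * √(α * β) < 2 - α - β) :
    IsDiagonalizableC (toyLC α β) ∧ ∀ μ ∈ spectrum ℂ (toyLC α β), μ.re = 0 := by
  obtain ⟨w₁, w₂, hw₁, hw₂, hne, hsum, hprod⟩ :=
    exists_sq_add_sq_of_two_mul_sqrt_lt (mul_pos hα hβ) h
  have hspec (μ : ℂ) :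
      μ ∈ spectrum ℂ (toyLC α β) ↔ μ ^ 2 = -(w₁ : ℂ) ^ 2 ∨ μ ^ 2 = -(w₂ : ℂ) ^ 2 := by
    simp [mem_spectrum_toyLC_iff, toyChar_eq_mul hsum hprod, add_eq_zero_iff_eq_neg]
  refine ⟨isDiagonalizableC_of_injective_of_mem_spectrum
    ![Complex.I * w₁, -(Complex.I * w₁), Complex.I * w₂, -(Complex.I * w₂)] ?_ ?_,
    fun μ hμ => ?_⟩
  · intro i j hij
    fin_cases i <;> fin_cases j <;> simp [Complex.ext_iff] at hij ⊢
    all_goals first | exact hne hij | exact hne hij.symm | linarith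
  · intro j
    rw [hspec]
    fin_cases j <;> simp [mul_pow]
  · rcases (hspec μ).1 hμ with h | h <;>
      exact (Complex.re_eq_zero_iff_exists_sq_eq_neg_sq μ).2 ⟨_, h⟩

theorem stmt_0 (α β : ℝ) (hα : 0 < α) (hβ : 0 < β) :
    (IsDiagonalizableC (toyLC α β) ∧ ∀ μ ∈ spectrum ℂ (toyLC α β), μ.re = 0) ↔
      Real.sqrt α + Real.sqrt β < Real.sqrt 2 := by
  rw [Real.sqrt_add_sqrt_lt_sqrt_two_iff hα.le hβ.le]
  exact ⟨fun h => two_mul_sqrt_lt_of_isDiagonalizableC_toyLC h.1 h.2,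
    isDiagonalizableC_toyLC_of_two_mul_sqrt_lt hα hβ⟩
end

section
/- Let α, β > 0 with √α + √β = √2, and let L be the real 4×4 matrix [[0,0,1,0],[0,0,0,1],[2α,0,0,2],[0,2β,−2,0]]. Then the characteristic polynomial of L equals (λ² + 2√(αβ))², so every complex eigenvalue of L is purely imaginary and nonzero, but L is not diagonalizable over ℂ. (Hence the equilibrium is spectrally stable but not linearly stable.) -/
/-!
Expanding the determinant, `charpoly L = X⁴ + (4 - 2α - 2β) X² + 4αβ`, and the condition
`√α + √β = √2` says exactly that `4 - 2α - 2β = 4√(αβ)`, which makes this the perfect square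
`(X² + s)²` with `s = 2√(αβ) > 0`. So every eigenvalue satisfies `μ² = -s`, i.e. `μ = ±i√s`.
If `L` were diagonalizable, it would then satisfy `L² = -s`; but `L²` has the off-diagonal
entry `(L²)₀₃ = 2`.
-/

open Matrix Polynomial

theorem Matrix.sq_eq_of_mem_spectrum_of_charpoly_eq {K n : Type*} [Field K] [Fintype n]
    [DecidableEq n] {A : Matrix n n K} {c : K} (hA : A.charpoly = (X ^ 2 + C c) ^ 2) {μ : K}
    (hμ : μ ∈ spectrum K A) : μ ^ 2 = -c := by
  rw [mem_spectrum_iff_isRoot_charpoly, hA, IsRoot.def] at hμ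
  simp only [eval_pow, eval_add, eval_X, eval_C, pow_eq_zero_iff two_ne_zero] at hμ
  exact eq_neg_of_add_eq_zero_left hμ

open Complex in
theorem Complex.re_eq_zero_and_ne_zero_of_sq_eq_neg {s : ℝ} (hs : 0 < s) {z : ℂ}
    (hz : z ^ 2 = -s) : z.re = 0 ∧ z ≠ 0 := by
  have hz' : z ^ 2 = (Real.sqrt s * I) ^ 2 := by
    rw [hz, mul_pow, ← ofReal_pow, Real.sq_sqrt hs.le, I_sq, mul_neg_one]
  rcases sq_eq_sq_iff_eq_or_eq_neg.1 hz' with rfl | rfl <;> simp [(Real.sqrt_pos.2 hs).ne']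

theorem IsDiagonalizableC.sq_eq_smul_one {N : ℕ} {A : Matrix (Fin N) (Fin N) ℂ}
    (hA : IsDiagonalizableC A) {c : ℂ} (hc : ∀ μ ∈ spectrum ℂ A, μ ^ 2 = c) :
    A ^ 2 = c • 1 := by
  obtain ⟨P, hP, hD⟩ := hA
  have hdet : IsUnit P.det := (isUnit_iff_isUnit_det P).mp hP
  set D := P⁻¹ * A * P
  have hspec : spectrum ℂ D = spectrum ℂ A := by
    simpa [Matrix.coe_units_inv] using spectrum.units_conjugate' (R := ℂ) (a := A) (u := hP.unit)
  have hD2 : D ^ 2 = c • 1 := by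
    rw [← hD.diagonal_diag, diagonal_pow, smul_one_eq_diagonal]
    congr 1
    funext i
    refine hc _ ?_
    rw [← hspec, ← hD.diagonal_diag, spectrum_diagonal]
    exact ⟨i, by rw [diag_diagonal]⟩
  have hconj : P⁻¹ * A ^ 2 * P = c • 1 := by
    rw [← hD2, sq, sq]
    simp only [D, Matrix.mul_assoc, mul_nonsing_inv_cancel_left _ _ hdet]
  calc A ^ 2 = P * (P⁻¹ * A ^ 2 * P) * P⁻¹ := by
        simp only [Matrix.mul_assoc, mul_nonsing_inv _ hdet, Matrix.mul_one,
          mul_nonsing_inv_cancel_left _ _ hdet]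
    _ = c • 1 := by
        rw [hconj, Matrix.mul_smul, Matrix.mul_one, Matrix.smul_mul, mul_nonsing_inv _ hdet]

theorem toyL_charpoly (α β : ℝ) :
    (toyL α β).charpoly = X ^ 4 + C (4 - 2 * α - 2 * β) * X ^ 2 + C (4 * α * β) := by
  simp [charpoly, det_succ_row_zero, Fin.sum_univ_succ, toyL, Fin.succAbove,
    map_sub, map_mul, map_ofNat]
  ring

theorem toyL_charpoly_of_sqrt_add_sqrt_eq {α β : ℝ} (hα : 0 ≤ α) (hβ : 0 ≤ β)
    (h : Real.sqrt α + Real.sqrt β = Real.sqrt 2) :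
    (toyL α β).charpoly = (X ^ 2 + C (2 * Real.sqrt (α * β))) ^ 2 := by
  have hsum : α + β + 2 * Real.sqrt (α * β) = 2 := by
    calc α + β + 2 * Real.sqrt (α * β) = (Real.sqrt α + Real.sqrt β) ^ 2 := by
          rw [Real.sqrt_mul hα, add_sq, Real.sq_sqrt hα, Real.sq_sqrt hβ]; ring
      _ = 2 := by rw [h, Real.sq_sqrt zero_le_two]
  have hsq : Real.sqrt (α * β) ^ 2 = α * β := Real.sq_sqrt (mul_nonneg hα hβ)
  rw [toyL_charpoly, show 4 - 2 * α - 2 * β = 2 * (2 * Real.sqrt (α * β)) by linarith,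
    show 4 * α * β = (2 * Real.sqrt (α * β)) ^ 2 by rw [mul_pow, hsq]; ring]
  simp only [map_mul, map_pow, map_ofNat]
  ring

theorem toyLC_sq_apply_zero_three (α β : ℝ) : (toyLC α β ^ 2) 0 3 = 2 := by
  simp [sq, toyLC, toyL, Matrix.mul_apply, Fin.sum_univ_four]

theorem stmt_3 (α β : ℝ) (hα : 0 < α) (hβ : 0 < β)
    (h : Real.sqrt α + Real.sqrt β = Real.sqrt 2) :
    (toyL α β).charpoly = (X^2 + C (2 * Real.sqrt (α*β)))^2 ∧
    (∀ μ ∈ spectrum ℂ (toyLC α β), μ.re = 0 ∧ μ ≠ 0) ∧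
    ¬ IsDiagonalizableC (toyLC α β) := by
  have hcharpoly := toyL_charpoly_of_sqrt_add_sqrt_eq hα.le hβ.le h
  set s := 2 * Real.sqrt (α * β)
  have hs : 0 < s := by positivity
  have hspec : ∀ μ ∈ spectrum ℂ (toyLC α β), μ ^ 2 = -(s : ℂ) := fun μ hμ =>
    sq_eq_of_mem_spectrum_of_charpoly_eq (by rw [toyLC, charpoly_map, hcharpoly]; simp) hμ
  refine ⟨hcharpoly, fun μ hμ => Complex.re_eq_zero_and_ne_zero_of_sq_eq_neg hs (hspec μ hμ),
    fun hdiag => ?_⟩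
  have h03 := congrFun₂ (hdiag.sq_eq_smul_one hspec) 0 3
  rw [toyLC_sq_apply_zero_three] at h03
  simp at h03
end

section
/- Let α, β > 0. There exists C ∈ ℝ such that ½(C−1)² x² + ½(C+1)² y² ≤ αx² + βy² for all (x,y) ∈ ℝ² if and only if √α + √β ≥ √2. Equivalently, the system of inequalities (C−1)² ≤ 2α and (C+1)² ≤ 2β has a real solution C if and only if √α + √β ≥ √2. (For the function f_C(x,y) = Cxy, the left-hand side minus the right-hand side equals H((x,y), ∇f_C(x,y)), where H is the toy-model Hamiltonian.) -/
lemma aux_key (α β : ℝ) (hα : 0 < α) (hβ : 0 < β) :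
    (∃ C : ℝ, (C-1)^2 ≤ 2*α ∧ (C+1)^2 ≤ 2*β) ↔
      Real.sqrt 2 ≤ Real.sqrt α + Real.sqrt β := by
  set a := Real.sqrt (2*α) with ha
  set b := Real.sqrt (2*β) with hb
  have ha0 : 0 ≤ a := Real.sqrt_nonneg _
  have hb0 : 0 ≤ b := Real.sqrt_nonneg _
  have ha2 : a^2 = 2*α := Real.sq_sqrt (by linarith)
  have hb2 : b^2 = 2*β := Real.sq_sqrt (by linarith)
  have hsplit_a : a = Real.sqrt 2 * Real.sqrt α := Real.sqrt_mul (by norm_num) _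
  have hsplit_b : b = Real.sqrt 2 * Real.sqrt β := Real.sqrt_mul (by norm_num) _
  have h2 : (0:ℝ) < Real.sqrt 2 := Real.sqrt_pos.mpr (by norm_num)
  have h22 : Real.sqrt 2 * Real.sqrt 2 = 2 := Real.mul_self_sqrt (by norm_num)
  constructor
  · rintro ⟨C, h1, h2a⟩
    have hc1 : |C - 1| ≤ a := by
      rw [abs_le]
      constructor <;> nlinarith [sq_nonneg (C - 1 + a), sq_nonneg (C - 1 - a)]
    have hc2 : |C + 1| ≤ b := by
      rw [abs_le]
      constructor <;> nlinarith [sq_nonneg (C + 1 + b), sq_nonneg (C + 1 - b)]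
    have hab : 2 ≤ a + b := by
      have := abs_le.mp hc1
      have := abs_le.mp hc2
      linarith
    have : Real.sqrt 2 * Real.sqrt 2 ≤ Real.sqrt 2 * (Real.sqrt α + Real.sqrt β) := by
      rw [h22]; rw [hsplit_a, hsplit_b] at hab; linarith
    exact le_of_mul_le_mul_left this h2
  · intro h
    have hab : 2 ≤ a + b := by
      have : Real.sqrt 2 * Real.sqrt 2 ≤ Real.sqrt 2 * (Real.sqrt α + Real.sqrt β) :=
        mul_le_mul_of_nonneg_left h h2.le
      rw [h22] at this
      rw [hsplit_a, hsplit_b]; linarith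
    refine ⟨max (1 - a) (-1 - b), ?_, ?_⟩
    · have hle : max (1 - a) (-1 - b) ≤ 1 + a := by
        apply max_le <;> linarith
      have hge : 1 - a ≤ max (1 - a) (-1 - b) := le_max_left _ _
      nlinarith [sq_nonneg (max (1 - a) (-1 - b) - 1)]
    · have hle : max (1 - a) (-1 - b) ≤ -1 + b := by
        apply max_le <;> linarith
      have hge : -1 - b ≤ max (1 - a) (-1 - b) := le_max_right _ _
      nlinarith [sq_nonneg (max (1 - a) (-1 - b) + 1)]

theorem stmt_4 (α β : ℝ) (hα : 0 < α) (hβ : 0 < β) :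
    ((∃ C : ℝ, ∀ x y : ℝ,
        (1/2)*(C-1)^2*x^2 + (1/2)*(C+1)^2*y^2 ≤ α*x^2 + β*y^2) ↔
      Real.sqrt 2 ≤ Real.sqrt α + Real.sqrt β) ∧
    ((∃ C : ℝ, (C-1)^2 ≤ 2*α ∧ (C+1)^2 ≤ 2*β) ↔
      Real.sqrt 2 ≤ Real.sqrt α + Real.sqrt β) := by
  have hk := aux_key α β hα hβ
  constructor
  · rw [← hk]
    constructor
    · rintro ⟨C, h⟩
      refine ⟨C, ?_, ?_⟩
      · have := h 1 0; nlinarith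
      · have := h 0 1; nlinarith
    · rintro ⟨C, h1, h2⟩
      refine ⟨C, fun x y => ?_⟩
      nlinarith [sq_nonneg x, sq_nonneg y]
  · exact hk
end

section
/- Let α, β > 0 with 1 ≤ α + β < 2, and set t_− = (1 − √(α + β − 1))/√2. Then the following trichotomy holds: (i) √α + √β < √2 if and only if (α − t_−²)(β − t_−²) < 0 (the coefficients have opposite signs, so the level set {(x,y) : α(α − t_−²)x² + β(β − t_−²)y² = t_−² e} bounding the positive-curvature region is a hyperbola for every e > 0); (ii) √α + √β > √2 if and only if α > t_−² and β > t_−² (so this level set is an ellipse); (iii) √α + √β = √2 if and only if min(α, β) = t_−² (degenerate case: the level set is a pair of parallel lines). -/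
/-- Trichotomy for the sign configuration of the coefficients `α − t₋²`,
`β − t₋²` of the quadric bounding the positive-curvature region, where
`t₋ = (1 − √(α+β−1))/√2` is the smaller root of the curvature quadratic. -/
theorem stmt_15 (α β : ℝ) (hα : 0 < α) (hβ : 0 < β)
    (h1 : 1 ≤ α + β) (h2 : α + β < 2)
    (tm : ℝ) (htm : tm = (1 - Real.sqrt (α + β - 1)) / Real.sqrt 2) :
    (Real.sqrt α + Real.sqrt β < Real.sqrt 2 ↔ (α - tm^2) * (β - tm^2) < 0) ∧
    (Real.sqrt 2 < Real.sqrt α + Real.sqrt β ↔ (tm^2 < α ∧ tm^2 < β)) ∧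
    (Real.sqrt α + Real.sqrt β = Real.sqrt 2 ↔ min α β = tm^2) := by
  set d := Real.sqrt (α + β - 1) with hd
  have hd0 : 0 ≤ d := Real.sqrt_nonneg _
  have hd2 : d ^ 2 = α + β - 1 := Real.sq_sqrt (by linarith)
  have hs2 : (Real.sqrt 2) ^ 2 = 2 := Real.sq_sqrt (by norm_num)
  have hT : tm ^ 2 = (α + β - 2 * d) / 2 := by
    rw [htm, div_pow, hs2]
    have : (1 - d) ^ 2 = α + β - 2 * d := by nlinarith [hd2]
    rw [this]
  have key : (α - tm ^ 2) * (β - tm ^ 2) = α * β - ((2 - (α + β)) / 2) ^ 2 := by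
    rw [hT]; linear_combination hd2
  have hsumT : α + β - 2 * tm ^ 2 = 2 * d := by rw [hT]; ring
  have hab : Real.sqrt α * Real.sqrt β = Real.sqrt (α * β) := (Real.sqrt_mul hα.le β).symm
  have ha2 : Real.sqrt α ^ 2 = α := Real.sq_sqrt hα.le
  have hb2 : Real.sqrt β ^ 2 = β := Real.sq_sqrt hβ.le
  have hsum2 : (Real.sqrt α + Real.sqrt β) ^ 2 = α + β + 2 * Real.sqrt (α * β) := by
    have : (Real.sqrt α + Real.sqrt β) ^ 2
        = Real.sqrt α ^ 2 + Real.sqrt β ^ 2 + 2 * (Real.sqrt α * Real.sqrt β) := by ring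
    rw [this, ha2, hb2, hab]
  have hnn : 0 ≤ Real.sqrt α + Real.sqrt β := by positivity
  have hc0 : 0 < (2 - (α + β)) / 2 := by linarith
  have iff1 : Real.sqrt α + Real.sqrt β < Real.sqrt 2 ↔
      α * β < ((2 - (α + β)) / 2) ^ 2 := by
    rw [show (Real.sqrt α + Real.sqrt β < Real.sqrt 2) ↔
        (Real.sqrt α + Real.sqrt β) ^ 2 < 2 from (Real.lt_sqrt hnn), hsum2]
    constructor
    · intro h
      have h' : Real.sqrt (α * β) < (2 - (α + β)) / 2 := by linarith
      exact (Real.sqrt_lt' hc0).mp h'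
    · intro h
      have h' : Real.sqrt (α * β) < (2 - (α + β)) / 2 := (Real.sqrt_lt' hc0).mpr h
      linarith
  have iff2 : Real.sqrt 2 < Real.sqrt α + Real.sqrt β ↔
      ((2 - (α + β)) / 2) ^ 2 < α * β := by
    rw [show (Real.sqrt 2 < Real.sqrt α + Real.sqrt β) ↔
        2 < (Real.sqrt α + Real.sqrt β) ^ 2 from (Real.sqrt_lt' (by positivity)), hsum2]
    constructor
    · intro h
      have h' : (2 - (α + β)) / 2 < Real.sqrt (α * β) := by linarith
      exact (Real.lt_sqrt hc0.le).mp h'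
    · intro h
      have h' : (2 - (α + β)) / 2 < Real.sqrt (α * β) := (Real.lt_sqrt hc0.le).mpr h
      linarith
  refine ⟨?_, ?_, ?_⟩
  · rw [iff1]; constructor <;> intro h <;> linarith [key]
  · rw [iff2]
    constructor
    · intro h
      have hp : 0 < (α - tm ^ 2) * (β - tm ^ 2) := by linarith [key]
      rcases mul_pos_iff.mp hp with ⟨ha, hb⟩ | ⟨ha, hb⟩
      · exact ⟨by linarith, by linarith⟩
      · exfalso; linarith [hd0, hsumT]
    · rintro ⟨h1', h2'⟩
      linarith [key, mul_pos (sub_pos.mpr h1') (sub_pos.mpr h2')]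
  · constructor
    · intro h
      have hprod : (α - tm ^ 2) * (β - tm ^ 2) = 0 := by
        have hlt := iff1.not.mp (by rw [h]; exact lt_irrefl _)
        have hgt := iff2.not.mp (by rw [h]; exact lt_irrefl _)
        push_neg at hlt hgt
        linarith [key]
      rcases mul_eq_zero.mp hprod with h0 | h0
      · have hαT : α = tm ^ 2 := by linarith
        have : α ≤ β := by linarith [hsumT, hd0]
        rw [min_eq_left this, hαT]
      · have hβT : β = tm ^ 2 := by linarith
        have : β ≤ α := by linarith [hsumT, hd0]
        rw [min_eq_right this, hβT]
    · intro h
      have hprod : (α - tm ^ 2) * (β - tm ^ 2) = 0 := by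
        rcases min_cases α β with ⟨he, _⟩ | ⟨he, _⟩ <;> rw [he] at h <;> rw [h] <;> ring
      rcases lt_trichotomy (Real.sqrt α + Real.sqrt β) (Real.sqrt 2) with hlt | heq | hgt
      · exfalso
        have := iff1.mp hlt
        linarith [key]
      · exact heq
      · exfalso
        have := iff2.mp hgt
        linarith [key]
end

section
/- Let m₁, m₂, m₃ > 0 with m₁ + m₂ + m₃ = 1, and set μ = m₁m₂ + m₁m₃ + m₂m₃ (so that 0 < μ ≤ 1/3), k = μ^{3/4}, α = (3/4) k² (1 − √(1 − 3μ)), and β = (3/4) k² (1 + √(1 − 3μ)). Then α > 0, β > 0, and the curvature stability condition √α + √β < √2 k holds if and only if μ < 1/27, i.e. if and only if Routh's criterion (m₁m₂ + m₁m₃ + m₂m₃)/(m₁ + m₂ + m₃)² < 1/27 is satisfied. -/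
private lemma aux_fwd {K t : ℝ} (hK : 0 < K)
    (h : 3/2 * K + 2 * (3/4 * K * t) < 2 * K) : t < 1/3 := by nlinarith

private lemma aux_bwd {K t : ℝ} (hK : 0 < K) (ht : 0 ≤ t)
    (h : t < 1/3) : 3/2 * K + 2 * (3/4 * K * t) < 2 * K := by nlinarith

/-- For the Lagrange equilateral triangle relative equilibrium of the planar
three-body problem (total mass normalized to 1), the two-dimensional
electromagnetic curvature stability criterion `√α + √β < √2 k` is equivalent
to Routh's classical criterion. -/
theorem stmt_16 (m₁ m₂ m₃ : ℝ) (h₁ : 0 < m₁) (h₂ : 0 < m₂) (h₃ : 0 < m₃)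
    (hsum : m₁ + m₂ + m₃ = 1)
    (μ k α β : ℝ)
    (hμ : μ = m₁*m₂ + m₁*m₃ + m₂*m₃)
    (hk : k = μ ^ ((3:ℝ)/4))
    (hα : α = (3/4) * k^2 * (1 - Real.sqrt (1 - 3*μ)))
    (hβ : β = (3/4) * k^2 * (1 + Real.sqrt (1 - 3*μ))) :
    (0 < μ ∧ μ ≤ 1/3) ∧ 0 < α ∧ 0 < β ∧
    (Real.sqrt α + Real.sqrt β < Real.sqrt 2 * k ↔ μ < 1/27) ∧
    (μ < 1/27 ↔ (m₁*m₂ + m₁*m₃ + m₂*m₃) / (m₁ + m₂ + m₃)^2 < 1/27) := by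
  have hμpos : 0 < μ := by rw [hμ]; positivity
  have hμle : μ ≤ 1/3 := by
    nlinarith [sq_nonneg (m₁ - m₂), sq_nonneg (m₁ - m₃), sq_nonneg (m₂ - m₃)]
  have h3μ : 0 ≤ 1 - 3*μ := by linarith
  have hs1 : Real.sqrt (1 - 3*μ) < 1 :=
    (Real.sqrt_lt' one_pos).mpr (by nlinarith)
  have hsnn : 0 ≤ Real.sqrt (1 - 3*μ) := Real.sqrt_nonneg _
  have hs2 : Real.sqrt (1 - 3*μ) ^ 2 = 1 - 3*μ := Real.sq_sqrt h3μ
  have hk0 : 0 < k := by rw [hk]; positivity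
  have hk2 : 0 < k^2 := by positivity
  have hα0 : 0 < α := by rw [hα]; nlinarith
  have hβ0 : 0 < β := by rw [hβ]; nlinarith
  have hαβ : α * β = ((3/4) * k^2)^2 * (3*μ) := by
    rw [hα, hβ]; nlinarith [hs2]
  have hAB : Real.sqrt α * Real.sqrt β = (3/4) * k^2 * Real.sqrt (3*μ) := by
    rw [← Real.sqrt_mul hα0.le, hαβ, Real.sqrt_mul (sq_nonneg _), Real.sqrt_sq (by positivity)]
  have hA2 : Real.sqrt α ^ 2 = α := Real.sq_sqrt hα0.le
  have hB2 : Real.sqrt β ^ 2 = β := Real.sq_sqrt hβ0.le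
  have hsum2 : α + β = (3/2) * k^2 := by rw [hα, hβ]; ring
  have h2k : (Real.sqrt 2 * k)^2 = 2 * k^2 := by
    rw [mul_pow, Real.sq_sqrt (by norm_num : (0:ℝ) ≤ 2)]
  have hexp : (Real.sqrt α + Real.sqrt β)^2 = α + β + 2 * (Real.sqrt α * Real.sqrt β) := by
    rw [add_sq, hA2, hB2]; ring
  have key : Real.sqrt α + Real.sqrt β < Real.sqrt 2 * k ↔ Real.sqrt (3*μ) < 1/3 := by
    constructor
    · intro h
      have hsq : (Real.sqrt α + Real.sqrt β)^2 < (Real.sqrt 2 * k)^2 :=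
        pow_lt_pow_left₀ h (by positivity) (by norm_num)
      rw [h2k, hexp, hsum2, hAB] at hsq
      exact aux_fwd hk2 hsq
    · intro h
      have hsq : (Real.sqrt α + Real.sqrt β)^2 < (Real.sqrt 2 * k)^2 := by
        rw [h2k, hexp, hsum2, hAB]
        exact aux_bwd hk2 (Real.sqrt_nonneg _) h
      exact lt_of_pow_lt_pow_left₀ 2 (by positivity) hsq
  have key2 : Real.sqrt (3*μ) < 1/3 ↔ μ < 1/27 := by
    rw [Real.sqrt_lt' (by norm_num : (0:ℝ) < 1/3)]
    constructor <;> intro <;> nlinarith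
  refine ⟨⟨hμpos, hμle⟩, hα0, hβ0, key.trans key2, ?_⟩
  rw [hsum, ← hμ]; norm_num
end
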